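/- arXiv:2501.19038 — 5 statements merged into one kernel-verified Lean document; each statement's English description precedes it below -/
import Mathlib

section
/- Let (X_i, Y_i, U_i), i = 1, ..., N+1, be an i.i.d. sequence taking values in 𝒳 × 𝒴 × [0,1], with 𝒴 finite. Let Ŷ(x, u, τ) be a set-valued predictor satisfying the nestedness property, assume there exists τ ∈ ℝ with Ŷ(x, u, τ) = 𝒴 for all x, u, and define the scores S_i = inf{ τ ∈ ℝ : Y_i ∈ Ŷ(X_i, U_i, τ) }. Assume the sets grow smoothly in τ in the sense that almost surely S_1, ..., S_{N+1} are pairwise distinct and Y_i ∈ Ŷ(X_i, U_i, S_i) for each i. Define τ* = inf{ τ ∈ ℝ : |{ i ≤ N : Y_i ∈ Ŷ(X_i, U_i, τ) }| ≥ ⌈(1−α)(N+1)⌉ }. Then for any α ∈ (0,1), P[ Y_{N+1} ∈ Ŷ(X_{N+1}, U_{N+1}, τ*) ] ≤ 1 − α + 1/(N+1). -/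
/-!
On the event where the scores are distinct, attained and not junk values of `sInf`, the test
point is covered at level `τ` iff its score is `≤ τ`. Covering at the calibrated threshold `τ*`
then forces the rank of the test score among all `N + 1` scores to be at most
`k = ⌈(1 - α)(N + 1)⌉`. By exchangeability every sample has the same probability of having
rank `≤ k`, while distinct scores have distinct ranks, so at most `k` samples do; hence the
probability is at most `k / (N + 1) < 1 - α + 1 / (N + 1)`.
-/

open MeasureTheory Classical

section Score

variable {α : Type*} {C : ℝ → Set α}

noncomputable def score (C : ℝ → Set α) (z : α) : ℝ := sInf {τ | z ∈ C τ}

open Finset in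
noncomputable def conformalThreshold {n : ℕ} (C : ℝ → Set α) (k : ℤ) (z : Fin n → α) : ℝ :=
  sInf {τ | k ≤ #{i | z i ∈ C τ}}

theorem setOf_mem_nonempty_iff (hC : Monotone C) {z : α} :
    {τ | z ∈ C τ}.Nonempty ↔ ∃ n : ℕ, z ∈ C n :=
  ⟨fun ⟨τ, hτ⟩ => (exists_nat_ge τ).imp fun _ hn => hC hn hτ, fun ⟨n, hn⟩ => ⟨n, hn⟩⟩

theorem not_bddBelow_setOf_mem_iff (hC : Monotone C) {z : α} :
    ¬ BddBelow {τ | z ∈ C τ} ↔ ∀ n : ℕ, z ∈ C (-n) := by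
  refine ⟨fun h n => ?_, fun h ⟨b, hb⟩ => ?_⟩
  · obtain ⟨τ, hτ, hlt⟩ := not_bddBelow_iff.mp h (-n)
    exact hC hlt.le hτ
  · obtain ⟨n, hn⟩ := exists_nat_gt (-b)
    linarith [hb (h n)]

theorem score_le_iff (hC : Monotone C) {z : α} (hne : {τ | z ∈ C τ}.Nonempty)
    (hbdd : BddBelow {τ | z ∈ C τ}) {t : ℝ} :
    score C z ≤ t ↔ ∀ q : ℚ, t < q → z ∈ C q := by
  refine ⟨fun h q hq => ?_, fun h => ?_⟩
  · obtain ⟨τ, hτ, hlt⟩ := exists_lt_of_csInf_lt hne (h.trans_lt hq)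
    exact hC hlt.le hτ
  · by_contra! hlt
    obtain ⟨q, htq, hqs⟩ := exists_rat_btwn hlt
    exact (csInf_le hbdd (h q htq)).not_gt hqs

theorem mem_iff_score_le (hC : Monotone C) {z : α} (hbdd : BddBelow {τ | z ∈ C τ})
    (hatt : z ∈ C (score C z)) {τ : ℝ} : z ∈ C τ ↔ score C z ≤ τ :=
  ⟨fun h => csInf_le hbdd h, fun h => hC h hatt⟩

variable [MeasurableSpace α]

theorem measurableSet_setOf_nonempty (hCm : ∀ τ, MeasurableSet (C τ)) (hC : Monotone C) :
    MeasurableSet {z | {τ | z ∈ C τ}.Nonempty} := by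
  simp_rw [setOf_mem_nonempty_iff hC, Set.ofPred_exists, Set.ofPred_mem_eq]
  exact MeasurableSet.iUnion fun n : ℕ => hCm n

theorem measurableSet_setOf_not_bddBelow (hCm : ∀ τ, MeasurableSet (C τ)) (hC : Monotone C) :
    MeasurableSet {z | ¬ BddBelow {τ | z ∈ C τ}} := by
  simp_rw [not_bddBelow_setOf_mem_iff hC, Set.ofPred_forall, Set.ofPred_mem_eq]
  exact MeasurableSet.iInter fun n : ℕ => hCm _

theorem measurable_score (hCm : ∀ τ, MeasurableSet (C τ)) (hC : Monotone C) :
    Measurable (score C) := by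
  set G := {z | {τ | z ∈ C τ}.Nonempty ∧ BddBelow {τ | z ∈ C τ}}
  refine measurable_of_Iic fun t => ?_
  have : score C ⁻¹' Set.Iic t = (G ∩ ⋂ (q : ℚ) (_ : t < q), C q) ∪ (Gᶜ ∩ {_z | 0 ≤ t}) := by
    ext z
    by_cases hz : z ∈ G
    · simp [hz, score_le_iff hC hz.1 hz.2]
    · have h0 : score C z = 0 := by
        rcases not_and_or.mp hz with h | h
        · rw [score, Set.not_nonempty_iff_eq_empty.mp h, Real.sInf_empty]
        · exact Real.sInf_of_not_bddBelow h
      simp [hz, h0]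
  rw [this]
  have hG : MeasurableSet G := by
    simpa only [G, Set.ofPred_and, Set.compl_ofPred, not_not] using
      (measurableSet_setOf_nonempty hCm hC).inter (measurableSet_setOf_not_bddBelow hCm hC).compl
  exact (hG.inter (MeasurableSet.iInter fun q : ℚ => MeasurableSet.iInter fun _ => hCm q)).union
    (hG.compl.inter (MeasurableSet.const _))

end Score

theorem measurableSet_setOf_mem_of_countable {W V : Type*} [MeasurableSpace W] [MeasurableSpace V]
    [Countable V] [MeasurableSingletonClass V] {F : W → Set V}
    (hF : ∀ v, MeasurableSet {w | v ∈ F w}) : MeasurableSet {p : W × V | p.2 ∈ F p.1} :=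
  measurableSet_setOfPred.mpr <| measurable_from_prod_countable_left fun v =>
    measurableSet_setOfPred.mp (hF v)

section Rank

open Finset

variable {ι β : Type*} [Fintype ι] [LinearOrder β]

def rank (x : ι → β) (j : ι) : ℕ := #{i | x i ≤ x j}

theorem rank_comp_perm (x : ι → β) (σ : Equiv.Perm ι) (j : ι) : rank (x ∘ σ) j = rank x (σ j) :=
  card_equiv σ (by simp)

theorem one_le_rank (x : ι → β) (j : ι) : 1 ≤ rank x j :=
  card_pos.mpr ⟨j, by simp⟩

theorem rank_lt_rank {x : ι → β} {i j : ι} (h : x i < x j) : rank x i < rank x j := by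
  refine card_lt_card ⟨fun a ha => mem_filter.mpr ⟨mem_univ a, (mem_filter.mp ha).2.trans h.le⟩,
    fun hsub => ?_⟩
  have := hsub (mem_filter.mpr ⟨mem_univ j, le_rfl⟩)
  exact (mem_filter.mp this).2.not_gt h

theorem rank_injective {x : ι → β} (hx : Function.Injective x) : Function.Injective (rank x) := by
  intro i j hij
  by_contra hne
  rcases (hx.ne hne).lt_or_gt with h | h
  · exact (rank_lt_rank h).ne hij
  · exact (rank_lt_rank h).ne' hij

theorem card_rank_le_le {x : ι → β} (hx : Function.Injective x) (k : ℕ) :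
    #{j | rank x j ≤ k} ≤ k := by
  simpa using card_le_card_of_injOn (rank x) (t := Icc 1 k)
    (fun j hj => mem_Icc.mpr ⟨one_le_rank x j, (mem_filter.mp hj).2⟩)
    (rank_injective hx).injOn

theorem rank_last {n : ℕ} {x : Fin (n + 1) → β} (hx : Function.Injective x) :
    rank x (Fin.last n) = #{i : Fin n | x i.castSucc < x (Fin.last n)} + 1 := by
  simp only [rank, card_filter, Fin.sum_univ_castSucc, le_refl, if_true]
  congr 2 with i
  simp only [le_iff_lt_or_eq, hx.eq_iff, Fin.castSucc_ne_last i, or_false]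

theorem sInf_setOf_le_card_lt {y : ι → ℝ} {k : ℤ} (hk : 0 < k) {t : ℝ}
    (h : k ≤ #{i | y i < t}) : sInf {τ : ℝ | k ≤ #{i | y i ≤ τ}} < t := by
  have hF : ({i | y i < t} : Finset ι).Nonempty := card_pos.mp (by omega)
  obtain ⟨i₀, hi₀, hm⟩ := exists_mem_eq_sup' hF y
  have hmem : ({i | y i < t} : Finset ι).sup' hF y ∈ {τ : ℝ | k ≤ #{i | y i ≤ τ}} := by
    refine h.trans (Nat.cast_le.mpr (card_le_card fun i hi => ?_))
    exact mem_filter.mpr ⟨mem_univ i, le_sup' y hi⟩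
  have hbdd : BddBelow {τ : ℝ | k ≤ #{i | y i ≤ τ}} := by
    refine ⟨univ.inf' ⟨i₀, mem_univ i₀⟩ y, fun τ hτ => ?_⟩
    have hτ : k ≤ #{i | y i ≤ τ} := hτ
    obtain ⟨i, hi⟩ := card_pos.mp (show 0 < #{i | y i ≤ τ} by omega)
    exact (inf'_le y (mem_univ i)).trans (mem_filter.mp hi).2
  calc sInf _ ≤ _ := csInf_le hbdd hmem
    _ < t := hm ▸ (mem_filter.mp hi₀).2

theorem rank_last_le_of_le_sInf {n : ℕ} {x : Fin (n + 1) → ℝ} (hx : Function.Injective x)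
    {k : ℤ} (hk : 0 < k)
    (h : x (Fin.last n) ≤ sInf {τ : ℝ | k ≤ #{i : Fin n | x i.castSucc ≤ τ}}) :
    (rank x (Fin.last n) : ℤ) ≤ k := by
  by_contra! hlt
  rw [rank_last hx] at hlt
  exact (sInf_setOf_le_card_lt hk (by push_cast at hlt; omega)).not_ge h

end Rank

section IID

open Finset ProbabilityTheory

variable {Ω α ι : Type*} [MeasurableSpace Ω] [MeasurableSpace α] {μ : Measure Ω}

theorem measure_preimage_comp_perm [Fintype ι] [IsProbabilityMeasure μ] {Z : ι → Ω → α}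
    (hZ : ∀ i, Measurable (Z i)) (hindep : iIndepFun Z μ)
    (hident : ∀ i j, IdentDistrib (Z i) (Z j) μ μ) (σ : Equiv.Perm ι) {R : Set (ι → α)}
    (hR : MeasurableSet R) :
    μ {ω | (fun i => Z (σ i) ω) ∈ R} = μ {ω | (fun i => Z i ω) ∈ R} := by
  have hlaw : μ.map (fun ω i => Z (σ i) ω) = μ.map (fun ω i => Z i ω) := by
    rw [(hindep.precomp σ.injective).map_fun_eq_pi_map fun i => (hZ _).aemeasurable,
      hindep.map_fun_eq_pi_map fun i => (hZ i).aemeasurable]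
    exact congrArg Measure.pi (funext fun i => (hident _ _).map_eq)
  have h := congrArg (· R) hlaw
  rwa [Measure.map_apply (measurable_pi_lambda _ fun i => hZ _) hR,
    Measure.map_apply (measurable_pi_lambda _ hZ) hR] at h

theorem sum_measure_le_of_ae_card_le [Fintype ι] {A : ι → Set Ω} (hA : ∀ j, MeasurableSet (A j))
    {k : ℕ} (h : ∀ᵐ ω ∂μ, #{j | ω ∈ A j} ≤ k) : ∑ j, μ (A j) ≤ k * μ Set.univ := by
  calc ∑ j, μ (A j) = ∫⁻ ω, ∑ j, (A j).indicator 1 ω ∂μ := by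
        rw [lintegral_finsetSum _ fun j _ => measurable_one.indicator (hA j)]
        simp [lintegral_indicator_one (hA _)]
    _ ≤ ∫⁻ _, (k : ENNReal) ∂μ := by
        refine lintegral_mono_ae (h.mono fun ω hω => ?_)
        simp only [Set.indicator_apply, Pi.one_apply, sum_boole]
        exact_mod_cast hω
    _ = k * μ Set.univ := lintegral_const _

theorem card_mul_measure_rank_le [Fintype ι] [IsProbabilityMeasure μ] {Z : ι → Ω → α}
    (hZ : ∀ i, Measurable (Z i)) (hindep : iIndepFun Z μ)
    (hident : ∀ i j, IdentDistrib (Z i) (Z j) μ μ) {s : α → ℝ} (hs : Measurable s)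
    (hinj : ∀ᵐ ω ∂μ, Function.Injective fun i => s (Z i ω)) (k : ℕ) (j : ι) :
    Fintype.card ι * μ {ω | rank (fun i => s (Z i ω)) j ≤ k} ≤ k := by
  set R : ι → Set (ι → α) := fun j => {f | rank (fun i => s (f i)) j ≤ k}
  have hR : ∀ j, MeasurableSet (R j) := by
    intro j
    have : Measurable fun f : ι → α => rank (fun i => s (f i)) j := by
      simp only [rank, card_filter]
      exact Finset.measurable_sum _ fun i _ => Measurable.ite
        (measurableSet_le (hs.comp (measurable_pi_apply i)) (hs.comp (measurable_pi_apply j)))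
        measurable_const measurable_const
    exact this (MeasurableSet.of_discrete (s := Set.Iic k))
  have hexch : ∀ j', μ {ω | (fun i => Z i ω) ∈ R j'} = μ {ω | (fun i => Z i ω) ∈ R j} := by
    intro j'
    rw [← measure_preimage_comp_perm hZ hindep hident (Equiv.swap j j') (hR j)]
    congr 1 with ω
    change rank (fun i => s (Z i ω)) j' ≤ k ↔ rank ((fun i => s (Z i ω)) ∘ Equiv.swap j j') j ≤ k
    rw [rank_comp_perm, Equiv.swap_apply_left]
  calc Fintype.card ι * μ {ω | rank (fun i => s (Z i ω)) j ≤ k}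
      = ∑ j', μ {ω | (fun i => Z i ω) ∈ R j'} := by
        rw [sum_congr rfl fun j' _ => hexch j', sum_const, card_univ, nsmul_eq_mul]; rfl
    _ ≤ k * μ Set.univ := sum_measure_le_of_ae_card_le
        (fun j' => measurable_pi_lambda _ hZ (hR j'))
        (hinj.mono fun ω hω => by convert card_rank_le_le hω k; exact Iff.rfl)
    _ = k := by simp

theorem measure_preimage_eq_zero_of_indepFun {X Y : Ω → α} (hXY : IndepFun X Y μ)
    (hid : IdentDistrib X Y μ μ) {P : Set α} (hP : MeasurableSet P)
    (h : μ (X ⁻¹' P ∩ Y ⁻¹' P) = 0) : μ (X ⁻¹' P) = 0 := by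
  rw [hXY.measure_inter_preimage_eq_mul P P hP hP, ← hid.measure_mem_eq hP] at h
  exact mul_self_eq_zero.mp h

/-- Two independent samples that both have unbounded-below sets get the same junk score `0`,
so distinctness of the scores forces `p ^ 2 = 0` for the probability `p` of this event. -/
theorem ae_bddBelow_setOf_mem [Countable ι] [Nontrivial ι] [IsProbabilityMeasure μ]
    {Z : ι → Ω → α} (hindep : iIndepFun Z μ) (hident : ∀ i j, IdentDistrib (Z i) (Z j) μ μ)
    {C : ℝ → Set α} (hCm : ∀ τ, MeasurableSet (C τ)) (hC : Monotone C)
    (hinj : ∀ᵐ ω ∂μ, Function.Injective fun i => score C (Z i ω)) :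
    ∀ᵐ ω ∂μ, ∀ i, BddBelow {τ | Z i ω ∈ C τ} := by
  refine ae_all_iff.mpr fun i => ?_
  obtain ⟨j, hji⟩ := exists_ne i
  have hP := measurableSet_setOf_not_bddBelow hCm hC
  have hsub : Z i ⁻¹' {z | ¬ BddBelow {τ | z ∈ C τ}} ∩ Z j ⁻¹' {z | ¬ BddBelow {τ | z ∈ C τ}} ⊆
      {ω | ¬ Function.Injective fun i => score C (Z i ω)} := fun ω ⟨hi, hj⟩ hω =>
    hji (hω ((Real.sInf_of_not_bddBelow hj).trans (Real.sInf_of_not_bddBelow hi).symm))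
  exact ae_iff.mpr (measure_preimage_eq_zero_of_indepFun (hindep.indepFun hji.symm)
    (hident i j) hP (measure_mono_null hsub (ae_iff.mp hinj)))

theorem card_mul_measure_mem_conformalThreshold_le [IsProbabilityMeasure μ] {n : ℕ}
    {Z : Fin (n + 1) → Ω → α} (hZ : ∀ i, Measurable (Z i)) (hindep : iIndepFun Z μ)
    (hident : ∀ i j, IdentDistrib (Z i) (Z j) μ μ)
    {C : ℝ → Set α} (hCm : ∀ τ, MeasurableSet (C τ)) (hC : Monotone C)
    (hsmooth : ∀ᵐ ω ∂μ, Function.Injective (fun i => score C (Z i ω)) ∧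
      ∀ i, Z i ω ∈ C (score C (Z i ω)))
    {k : ℤ} (hk : 0 < k) :
    (n + 1) * μ {ω | Z (Fin.last n) ω ∈
      C (conformalThreshold C k fun i => Z i.castSucc ω)} ≤ k.toNat := by
  rcases n.eq_zero_or_pos with rfl | hn
  · rw [Nat.cast_zero, zero_add, one_mul]
    exact prob_le_one.trans (by exact_mod_cast (by omega : 1 ≤ k.toNat))
  have : Nontrivial (Fin (n + 1)) := Fin.nontrivial_iff_two_le.mpr (by omega)
  have hinj := hsmooth.mono fun _ h => h.1
  have hcov : ∀ᵐ ω ∂μ,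
      Z (Fin.last n) ω ∈ C (conformalThreshold C k fun i => Z i.castSucc ω) →
      rank (fun i => score C (Z i ω)) (Fin.last n) ≤ k.toNat := by
    filter_upwards [hsmooth, ae_bddBelow_setOf_mem hindep hident hCm hC hinj]
      with ω ⟨hinjω, hatt⟩ hbdd hω
    have hcount : ∀ τ, #{i : Fin n | Z i.castSucc ω ∈ C τ} =
        #{i : Fin n | score C (Z i.castSucc ω) ≤ τ} := fun τ =>
      congrArg card (filter_congr fun i _ => mem_iff_score_le hC (hbdd _) (hatt _))
    simp only [conformalThreshold, hcount] at hω
    have := rank_last_le_of_le_sInf hinjω hk ((mem_iff_score_le hC (hbdd _) (hatt _)).mp hω)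
    omega
  calc (n + 1) * μ _
      ≤ (n + 1) * μ {ω | rank (fun i => score C (Z i ω)) (Fin.last n) ≤ k.toNat} :=
        mul_le_mul_right (measure_mono_ae hcov) _
    _ ≤ k.toNat := by
      simpa using card_mul_measure_rank_le hZ hindep hident (measurable_score hCm hC) hinj
        k.toNat (Fin.last n)

end IID

theorem toReal_le_one_sub_add_one_div {p : ENNReal} {N : ℕ} {α : ℝ} (hα : α < 1)
    (h : (N + 1) * p ≤ (⌈(1 - α) * ((N : ℝ) + 1)⌉).toNat) :
    p.toReal ≤ 1 - α + 1 / ((N : ℝ) + 1) := by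
  have hN : (0 : ℝ) < N + 1 := by positivity
  have hk : 0 ≤ ⌈(1 - α) * ((N : ℝ) + 1)⌉ :=
    (Int.ceil_pos.mpr (mul_pos (sub_pos.mpr hα) hN)).le
  have hcast : ((⌈(1 - α) * ((N : ℝ) + 1)⌉.toNat : ℕ) : ℝ) = ⌈(1 - α) * ((N : ℝ) + 1)⌉ := by
    exact_mod_cast Int.toNat_of_nonneg hk
  have hreal : p.toReal * (N + 1) ≤ ⌈(1 - α) * ((N : ℝ) + 1)⌉ := by
    have := ENNReal.toReal_mono (by simp) h
    rw [ENNReal.toReal_mul, mul_comm] at this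
    simpa [ENNReal.toReal_add, hcast] using this
  have hceil := Int.ceil_lt_add_one ((1 - α) * ((N : ℝ) + 1))
  rw [show 1 - α + 1 / ((N : ℝ) + 1) = ((1 - α) * (N + 1) + 1) / (N + 1) by field_simp,
    le_div_iff₀ hN]
  linarith

theorem marginal_validity_nested_conformal_upper_general
    {Ω : Type*} [MeasurableSpace Ω] (ℙ : Measure Ω) [IsProbabilityMeasure ℙ]
    {𝒳 : Type*} [MeasurableSpace 𝒳]
    {𝒴 : Type*} [Fintype 𝒴] [MeasurableSpace 𝒴] [MeasurableSingletonClass 𝒴]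
    (N : ℕ)
    -- the i.i.d. sequence (Xᵢ, Yᵢ, Uᵢ), i = 0, …, N (N+1 samples)
    (Z : Fin (N + 1) → Ω → 𝒳 × 𝒴 × ℝ)
    (hZmeas : ∀ i, Measurable (Z i))
    (hindep : ProbabilityTheory.iIndepFun Z ℙ)
    (hident : ∀ i j, ProbabilityTheory.IdentDistrib (Z i) (Z j) ℙ ℙ)
    -- the set-valued predictor
    (Yhat : 𝒳 → ℝ → ℝ → Set 𝒴)
    (hYmeas : ∀ (y : 𝒴) (τ : ℝ), MeasurableSet {q : 𝒳 × ℝ | y ∈ Yhat q.1 q.2 τ})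
    (hnested : ∀ (x : 𝒳) (u : ℝ) (τ₁ τ₂ : ℝ), τ₁ ≤ τ₂ → Yhat x u τ₁ ⊆ Yhat x u τ₂)
    -- the nonconformity scores Sᵢ = inf {τ : Yᵢ ∈ Ŷ(Xᵢ, Uᵢ, τ)}
    (S : Fin (N + 1) → Ω → ℝ)
    (hS : ∀ i ω, S i ω = sInf {τ : ℝ | (Z i ω).2.1 ∈ Yhat (Z i ω).1 (Z i ω).2.2 τ})
    -- the sets grow smoothly in τ: a.s. scores are pairwise distinct and attained
    (hsmooth : ∀ᵐ ω ∂ℙ, (∀ i j : Fin (N + 1), i ≠ j → S i ω ≠ S j ω) ∧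
      ∀ i : Fin (N + 1), (Z i ω).2.1 ∈ Yhat (Z i ω).1 (Z i ω).2.2 (S i ω))
    -- the miscoverage level
    (α : ℝ) (hα : α ∈ Set.Ioo (0 : ℝ) 1)
    -- the calibrated threshold τ*
    (τstar : Ω → ℝ)
    (hτstar : ∀ ω, τstar ω = sInf {τ : ℝ |
      (⌈(1 - α) * (N + 1)⌉ : ℤ) ≤
        ((Finset.univ.filter (fun i : Fin N =>
          (Z i.castSucc ω).2.1 ∈
            Yhat (Z i.castSucc ω).1 (Z i.castSucc ω).2.2 τ)).card : ℤ)}) :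
    (ℙ {ω | (Z (Fin.last N) ω).2.1 ∈
        Yhat (Z (Fin.last N) ω).1 (Z (Fin.last N) ω).2.2 (τstar ω)}).toReal ≤
      1 - α + 1 / (N + 1) := by
  set C : ℝ → Set (𝒳 × 𝒴 × ℝ) := fun τ => {z | z.2.1 ∈ Yhat z.1 z.2.2 τ}
  have hCm : ∀ τ, MeasurableSet (C τ) := fun τ =>
    (measurableSet_setOf_mem_of_countable (F := fun q : 𝒳 × ℝ => Yhat q.1 q.2 τ)
      (hYmeas · τ)).preimage (f := fun z : 𝒳 × 𝒴 × ℝ => ((z.1, z.2.2), z.2.1)) (by fun_prop)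
  have hC : Monotone C := fun τ₁ τ₂ h z hz => hnested _ _ τ₁ τ₂ h hz
  have hscore : ∀ᵐ ω ∂ℙ, Function.Injective (fun i => score C (Z i ω)) ∧
      ∀ i, Z i ω ∈ C (score C (Z i ω)) := by
    have hSC : ∀ i ω, score C (Z i ω) = S i ω := fun i ω => (hS i ω).symm
    filter_upwards [hsmooth] with ω ⟨hdist, hatt⟩
    simp only [hSC]
    exact ⟨fun i j h => by_contra fun hne => hdist i j hne h, hatt⟩
  obtain rfl : τstar = _ := funext hτstar
  exact toReal_le_one_sub_add_one_div hα.2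
    (card_mul_measure_mem_conformalThreshold_le hZmeas hindep hident hCm hC hscore
      (Int.ceil_pos.mpr (mul_pos (sub_pos.mpr hα.2) (by positivity))))

/-- **Marginal validity (upper bound) of nested conformal prediction.**
Let `(Xᵢ, Yᵢ, Uᵢ)`, `i = 1, …, N+1`, be an i.i.d. sequence with values in
`𝒳 × 𝒴 × [0,1]`, `𝒴` finite.  Let `Ŷ(x, u, τ)` be a nested set-valued predictor that
equals `𝒴` for some `τ`, with scores `Sᵢ = inf {τ : Yᵢ ∈ Ŷ(Xᵢ, Uᵢ, τ)}`.  If the sets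
grow smoothly in `τ` (a.s. the scores are pairwise distinct and attained), then with
`τ* = inf {τ : |{i ≤ N : Yᵢ ∈ Ŷ(Xᵢ, Uᵢ, τ)}| ≥ ⌈(1-α)(N+1)⌉}`, one has
`P[Y_{N+1} ∈ Ŷ(X_{N+1}, U_{N+1}, τ*)] ≤ 1 - α + 1/(N+1)`. -/
theorem marginal_validity_nested_conformal_upper
    {Ω : Type*} [MeasurableSpace Ω] (ℙ : Measure Ω) [IsProbabilityMeasure ℙ]
    {𝒳 : Type*} [MeasurableSpace 𝒳]
    {𝒴 : Type*} [Fintype 𝒴] [Nonempty 𝒴] [MeasurableSpace 𝒴] [MeasurableSingletonClass 𝒴]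
    (N : ℕ)
    -- the i.i.d. sequence (Xᵢ, Yᵢ, Uᵢ), i = 0, …, N (N+1 samples)
    (Z : Fin (N + 1) → Ω → 𝒳 × 𝒴 × ℝ)
    (hZmeas : ∀ i, Measurable (Z i))
    (hU : ∀ i ω, (Z i ω).2.2 ∈ Set.Icc (0 : ℝ) 1)
    (hindep : ProbabilityTheory.iIndepFun Z ℙ)
    (hident : ∀ i j, ProbabilityTheory.IdentDistrib (Z i) (Z j) ℙ ℙ)
    -- the set-valued predictor
    (Yhat : 𝒳 → ℝ → ℝ → Set 𝒴)
    (hYmeas : ∀ (y : 𝒴) (τ : ℝ), MeasurableSet {q : 𝒳 × ℝ | y ∈ Yhat q.1 q.2 τ})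
    (hnested : ∀ (x : 𝒳) (u : ℝ) (τ₁ τ₂ : ℝ), τ₁ ≤ τ₂ → Yhat x u τ₁ ⊆ Yhat x u τ₂)
    (hfull : ∃ τ : ℝ, ∀ (x : 𝒳) (u : ℝ), Yhat x u τ = Set.univ)
    -- the nonconformity scores Sᵢ = inf {τ : Yᵢ ∈ Ŷ(Xᵢ, Uᵢ, τ)}
    (S : Fin (N + 1) → Ω → ℝ)
    (hS : ∀ i ω, S i ω = sInf {τ : ℝ | (Z i ω).2.1 ∈ Yhat (Z i ω).1 (Z i ω).2.2 τ})
    -- the sets grow smoothly in τ: a.s. scores are pairwise distinct and attained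
    (hsmooth : ∀ᵐ ω ∂ℙ, (∀ i j : Fin (N + 1), i ≠ j → S i ω ≠ S j ω) ∧
      ∀ i : Fin (N + 1), (Z i ω).2.1 ∈ Yhat (Z i ω).1 (Z i ω).2.2 (S i ω))
    -- the miscoverage level
    (α : ℝ) (hα : α ∈ Set.Ioo (0 : ℝ) 1)
    -- the calibrated threshold τ*
    (τstar : Ω → ℝ)
    (hτstar : ∀ ω, τstar ω = sInf {τ : ℝ |
      (⌈(1 - α) * (N + 1)⌉ : ℤ) ≤
        ((Finset.univ.filter (fun i : Fin N =>
          (Z i.castSucc ω).2.1 ∈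
            Yhat (Z i.castSucc ω).1 (Z i.castSucc ω).2.2 τ)).card : ℤ)}) :
    (ℙ {ω | (Z (Fin.last N) ω).2.1 ∈
        Yhat (Z (Fin.last N) ω).1 (Z (Fin.last N) ω).2.2 (τstar ω)}).toReal ≤
      1 - α + 1 / (N + 1) :=
  marginal_validity_nested_conformal_upper_general ℙ N Z hZmeas hindep hident Yhat hYmeas hnested S
    hS hsmooth α hα τstar hτstar
end

section
/- Let S_1, ..., S_{N+1} be exchangeable (in particular, i.i.d.) real-valued random variables and let α ∈ (0,1). Let k = ⌈(1−α)(N+1)⌉ and let Q be the k-th smallest value among S_1, ..., S_N when k ≤ N, and Q = +∞ otherwise. Then P[ S_{N+1} ≤ Q ] ≥ 1 − α. -/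
/-!
Let `r j` be the number of scores strictly below `S j`. In every outcome at least `k` indices
satisfy `r j < k`: otherwise an index of minimal score outside that set would have all smaller
scores inside it, hence `r j < k`. So the events `{r j < k}` have total probability at least `k`,
and by exchangeability they are equiprobable, giving `P[r (N + 1) < k] ≥ k / (N + 1) ≥ 1 - α`.
Finally, fewer than `k` calibration scores lie strictly below `S (N + 1)` only if `S (N + 1)` is
at most their `k`-th smallest value.
-/

open MeasureTheory

/-- The `k`-th smallest value (1-indexed) among `f 0, …, f (n-1)`. -/
noncomputable def kthSmallest {n : ℕ} (f : Fin n → ℝ) (k : ℕ) (hk : 1 ≤ k) (hkn : k ≤ n) : ℝ :=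
  f (Tuple.sort f ⟨k - 1, by omega⟩)

open Finset
open scoped ENNReal

theorem le_kthSmallest_of_card_lt {n : ℕ} (f : Fin n → ℝ) {k : ℕ} (hk : 1 ≤ k) (hkn : k ≤ n)
    {x : ℝ} (hx : #{i | f i < x} < k) : x ≤ kthSmallest f k hk hkn := by
  by_contra! hlt
  set p : Fin n := ⟨k - 1, by omega⟩
  have hsub : (Iic p).map (Tuple.sort f).toEmbedding ⊆ ({i | f i < x} : Finset _) := by
    simp only [subset_iff, mem_map_equiv, mem_Iic, mem_filter_univ]
    intro i hi
    simpa using (Tuple.monotone_sort f hi).trans_lt hlt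
  have := card_le_card hsub
  simp only [card_map, Fin.card_Iic, p] at this
  omega

section StrictRank

variable {ι α : Type*} [Fintype ι] [LinearOrder α]

def strictRank (v : ι → α) (j : ι) : ℕ := #{i | v i < v j}

theorem strictRank_comp_equiv {κ : Type*} [Fintype κ] (v : ι → α) (e : κ ≃ ι) (j : κ) :
    strictRank (v ∘ e) j = strictRank v (e j) :=
  card_equiv e (by simp)

theorem le_card_strictRank_lt (v : ι → α) {k : ℕ} (hk : k ≤ Fintype.card ι) :
    k ≤ #{j | strictRank v j < k} := by
  by_contra! hlt
  have hne : ({j | ¬ strictRank v j < k} : Finset ι).Nonempty := by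
    rw [← card_pos]
    have := card_filter_add_card_filter_not (s := univ) (fun j => strictRank v j < k)
    rw [card_univ] at this
    omega
  obtain ⟨j, hj, hmin⟩ := exists_min_image _ v hne
  rw [mem_filter_univ] at hj
  have : strictRank v j ≤ #{j | strictRank v j < k} := by
    refine card_le_card fun i hi => ?_
    by_contra hiT
    exact ((mem_filter_univ i).1 hi).not_ge (hmin i (by simpa using hiT))
  omega

theorem measurable_strictRank [MeasurableSpace α] [TopologicalSpace α] [OpensMeasurableSpace α]
    [OrderClosedTopology α] [SecondCountableTopology α] (j : ι) :
    Measurable fun v : ι → α => strictRank v j := by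
  simp only [strictRank, card_filter]
  exact Finset.measurable_sum _ fun i _ =>
    Measurable.ite (measurableSet_lt (measurable_pi_apply i) (measurable_pi_apply j))
      measurable_const measurable_const

end StrictRank

theorem MeasureTheory.natCast_mul_measure_univ_le_sum {X ι : Type*} [MeasurableSpace X]
    [Fintype ι] (μ : Measure X) {p : ι → X → Prop} [∀ j x, Decidable (p j x)]
    (hp : ∀ j, MeasurableSet {x | p j x}) {k : ℕ} (hk : ∀ x, k ≤ #{j | p j x}) :
    k * μ Set.univ ≤ ∑ j, μ {x | p j x} := by
  have hcard : ∀ x, (#{j | p j x} : ℝ≥0∞) = ∑ j, {x | p j x}.indicator 1 x := by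
    intro x
    simp [Set.indicator_apply]
  calc (k : ℝ≥0∞) * μ Set.univ = ∫⁻ _, (k : ℝ≥0∞) ∂μ := by simp
    _ ≤ ∫⁻ x, ∑ j, {x | p j x}.indicator 1 x ∂μ :=
        lintegral_mono fun x => (hcard x) ▸ Nat.cast_le.2 (hk x)
    _ = ∑ j, μ {x | p j x} := by
        rw [lintegral_finsetSum _ fun j _ => measurable_one.indicator (hp j)]
        simp only [lintegral_indicator_one (hp _)]

section Exchangeable

variable {ι α : Type*} [Fintype ι] [LinearOrder α] [MeasurableSpace α] [TopologicalSpace α]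
  [OpensMeasurableSpace α] [OrderClosedTopology α] [SecondCountableTopology α]
  {μ : Measure (ι → α)}

theorem measurableSet_strictRank_lt (j : ι) (k : ℕ) :
    MeasurableSet {v : ι → α | strictRank v j < k} :=
  measurableSet_lt (measurable_strictRank j) measurable_const

theorem measure_strictRank_lt_eq (hμ : ∀ σ : Equiv.Perm ι, μ.map (· ∘ σ) = μ) (k : ℕ)
    (j j' : ι) : μ {v | strictRank v j < k} = μ {v | strictRank v j' < k} := by
  classical
  have hpre : (· ∘ Equiv.swap j j') ⁻¹' {v : ι → α | strictRank v j < k} =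
      {v | strictRank v j' < k} := by
    ext v
    simp [strictRank_comp_equiv]
  rw [← hpre, ← Measure.map_apply (by fun_prop) (measurableSet_strictRank_lt j k), hμ]

theorem natCast_le_card_mul_measure_strictRank_lt [IsProbabilityMeasure μ]
    (hμ : ∀ σ : Equiv.Perm ι, μ.map (· ∘ σ) = μ) (j : ι) {k : ℕ} (hk : k ≤ Fintype.card ι) :
    (k : ℝ≥0∞) ≤ Fintype.card ι * μ {v | strictRank v j < k} :=
  calc (k : ℝ≥0∞) = k * μ Set.univ := by simp
    _ ≤ ∑ j', μ {v | strictRank v j' < k} :=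
        natCast_mul_measure_univ_le_sum μ (measurableSet_strictRank_lt · k)
          fun v => le_card_strictRank_lt v hk
    _ = Fintype.card ι * μ {v | strictRank v j < k} := by
        simp [measure_strictRank_lt_eq hμ k _ j]

end Exchangeable

theorem last_le_kthSmallest_of_strictRank_lt {n : ℕ} (v : Fin (n + 1) → ℝ) {k : ℕ}
    (hk : 1 ≤ k) (hkn : k ≤ n) (h : strictRank v (Fin.last n) < k) :
    v (Fin.last n) ≤ kthSmallest (fun i : Fin n => v i.castSucc) k hk hkn := by
  refine le_kthSmallest_of_card_lt _ hk hkn (lt_of_le_of_lt ?_ h)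
  exact card_le_card_of_injOn Fin.castSucc (fun i hi => by simpa using hi)
    (Fin.castSucc_injective n).injOn

/-- **Calibration quantile lemma for split conformal prediction (lower bound).**
Let `S₁, …, S_{N+1}` be exchangeable real-valued random variables, `α ∈ (0,1)`,
`k = ⌈(1-α)(N+1)⌉`, and let `Q` be the `k`-th smallest value among `S₁, …, S_N`
when `k ≤ N`, and `Q = +∞` otherwise.  Then `P[S_{N+1} ≤ Q] ≥ 1 - α`. -/
theorem conformal_calibration_quantile_lower
    {Ω : Type*} [MeasurableSpace Ω] (ℙ : Measure Ω) [IsProbabilityMeasure ℙ]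
    (N : ℕ)
    (S : Fin (N + 1) → Ω → ℝ)
    (hSmeas : ∀ i, Measurable (S i))
    (hexch : ∀ σ : Equiv.Perm (Fin (N + 1)),
      Measure.map (fun ω => fun i => S (σ i) ω) ℙ =
        Measure.map (fun ω => fun i => S i ω) ℙ)
    (α : ℝ) (hα : α ∈ Set.Ioo (0 : ℝ) 1)
    (k : ℕ) (hk : (k : ℤ) = ⌈(1 - α) * (N + 1)⌉)
    (Q : Ω → EReal)
    (hQ : ∀ ω, Q ω =
      if h : 1 ≤ k ∧ k ≤ N then
        ((kthSmallest (fun i : Fin N => S i.castSucc ω) k h.1 h.2 : ℝ) : EReal)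
      else (⊤ : EReal)) :
    1 - α ≤ (ℙ {ω | ((S (Fin.last N) ω : ℝ) : EReal) ≤ Q ω}).toReal := by
  set E := {ω | ((S (Fin.last N) ω : ℝ) : EReal) ≤ Q ω}
  have hk_ge : (1 - α) * (N + 1) ≤ k := by exact_mod_cast hk ▸ Int.le_ceil _
  by_cases hkN : 1 ≤ k ∧ k ≤ N
  · set X : Ω → Fin (N + 1) → ℝ := fun ω i => S i ω
    have hX : Measurable X := measurable_pi_lambda _ hSmeas
    have hexchX (σ : Equiv.Perm (Fin (N + 1))) : (ℙ.map X).map (· ∘ σ) = ℙ.map X := by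
      rw [Measure.map_map (by fun_prop) hX]
      exact hexch σ
    have hsub : X ⁻¹' {v | strictRank v (Fin.last N) < k} ⊆ E := fun ω hω => by
      simp only [E, Set.mem_ofPred_eq, hQ, dif_pos hkN]
      exact_mod_cast last_le_kthSmallest_of_strictRank_lt (X ω) hkN.1 hkN.2 hω
    have := Measure.isProbabilityMeasure_map (μ := ℙ) hX.aemeasurable
    have hbound : (k : ℝ≥0∞) ≤ (N + 1 : ℕ) * ℙ E := calc
      (k : ℝ≥0∞) ≤ Fintype.card (Fin (N + 1)) * ℙ.map X {v | strictRank v (Fin.last N) < k} :=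
        natCast_le_card_mul_measure_strictRank_lt hexchX _ (by simp; omega)
      _ ≤ (N + 1 : ℕ) * ℙ E := by
        rw [Measure.map_apply hX (measurableSet_strictRank_lt _ _), Fintype.card_fin]
        gcongr
    have hreal : (k : ℝ) ≤ (N + 1) * (ℙ E).toReal := by
      have := ENNReal.toReal_mono (by finiteness) hbound
      rwa [ENNReal.toReal_mul, ENNReal.toReal_natCast, ENNReal.toReal_natCast,
        Nat.cast_succ] at this
    nlinarith
  · have hE : E = Set.univ := Set.eq_univ_of_forall fun ω => by
      simp [E, hQ, dif_neg hkN]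
    simp [hE, hα.1.le]
end

section
/- Fix a hierarchy V_T on a finite class space 𝒴, a probability vector p : 𝒴 → [0,1] with Σ_{c ∈ 𝒴} p(c) = 1, and u ∈ [0,1]. Let ŷ ∈ 𝒴 be a class maximizing p, and let Path(ŷ) ⊆ V_T be the chain of nodes containing ŷ, ordered by inclusion from the leaf {ŷ} to the root 𝒴. For a node v ∈ Path(ŷ) define the score s(v) = P(v) + u · P(pa(v) \ v), where for the root the term P(pa(v) \ v) is taken to be 0. Define Ŷ_1(τ) to be the node of maximal cardinality among { v ∈ Path(ŷ) : s(v) ≤ τ }, and Ŷ_1(τ) = ∅ if no node of Path(ŷ) satisfies s(v) ≤ τ. Then the predictor is nested: for all τ_1 ≤ τ_2, Ŷ_1(τ_1) ⊆ Ŷ_1(τ_2). -/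
/-- **Nestedness of the CRSVP predictor.**
Fix a hierarchy `V_T` on a finite class space `𝒴`, a probability vector `p`, and
`u ∈ [0,1]`.  Let `ŷ` maximize `p`, and for a node `v` on the path from the leaf `{ŷ}`
to the root define the score `s(v) = P(v) + u·P(pa(v) \ v)` (the second term being `0`
for the root).  Let `Ŷ₁(τ)` be the node of maximal cardinality on the path with
`s(v) ≤ τ` (and `∅` if there is none).  Then `τ₁ ≤ τ₂ → Ŷ₁(τ₁) ⊆ Ŷ₁(τ₂)`. -/
theorem crsvp_nested
    {𝒴 : Type*} [Fintype 𝒴] [DecidableEq 𝒴]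
    -- the hierarchy: a laminar family of nonempty nodes containing the root and all leaves
    (nodes : Finset (Finset 𝒴))
    (hnodes_ne : ∀ v ∈ nodes, v.Nonempty)
    (hlaminar : ∀ v ∈ nodes, ∀ w ∈ nodes, v ∩ w = ∅ ∨ v ⊆ w ∨ w ⊆ v)
    (hroot : (Finset.univ : Finset 𝒴) ∈ nodes)
    (hleaf : ∀ c : 𝒴, ({c} : Finset 𝒴) ∈ nodes)
    -- the probability vector
    (p : 𝒴 → ℝ) (hp0 : ∀ c, 0 ≤ p c) (hpsum : ∑ c, p c = 1)
    (P : Finset 𝒴 → ℝ) (hP : ∀ A : Finset 𝒴, P A = ∑ c ∈ A, p c)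
    -- the randomization term
    (u : ℝ) (hu : u ∈ Set.Icc (0 : ℝ) 1)
    -- a class maximizing p
    (yhat : 𝒴) (hyhat : ∀ c : 𝒴, p c ≤ p yhat)
    -- the parent map: the smallest node strictly containing a given non-root node
    (pa : Finset 𝒴 → Finset 𝒴)
    (hpa : ∀ v ∈ nodes, v ≠ Finset.univ →
      pa v ∈ nodes ∧ v ⊂ pa v ∧ ∀ w ∈ nodes, v ⊂ w → pa v ⊆ w)
    -- the score of a node
    (s : Finset 𝒴 → ℝ)
    (hs : ∀ v : Finset 𝒴,
      s v = P v + u * (if v = Finset.univ then 0 else P (pa v \ v)))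
    -- the CRSVP set-valued predictor
    (Yhat₁ : ℝ → Finset 𝒴)
    (hYhat₁ : ∀ τ : ℝ, (∃ v ∈ nodes, yhat ∈ v ∧ s v ≤ τ) →
      Yhat₁ τ ∈ nodes ∧ yhat ∈ Yhat₁ τ ∧ s (Yhat₁ τ) ≤ τ ∧
        ∀ v ∈ nodes, yhat ∈ v → s v ≤ τ → v.card ≤ (Yhat₁ τ).card)
    (hYhat₁' : ∀ τ : ℝ, (¬ ∃ v ∈ nodes, yhat ∈ v ∧ s v ≤ τ) → Yhat₁ τ = ∅) :
    ∀ τ₁ τ₂ : ℝ, τ₁ ≤ τ₂ → Yhat₁ τ₁ ⊆ Yhat₁ τ₂ := by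
  intro τ₁ τ₂ hτ
  by_cases h1 : ∃ v ∈ nodes, yhat ∈ v ∧ s v ≤ τ₁
  · obtain ⟨Am1, Ay1, As1, Amax1⟩ := hYhat₁ τ₁ h1
    have h2 : ∃ v ∈ nodes, yhat ∈ v ∧ s v ≤ τ₂ := by
      obtain ⟨v, hv, hyv, hsv⟩ := h1
      exact ⟨v, hv, hyv, hsv.trans hτ⟩
    obtain ⟨Am2, Ay2, As2, Amax2⟩ := hYhat₁ τ₂ h2
    have hcard : (Yhat₁ τ₁).card ≤ (Yhat₁ τ₂).card :=
      Amax2 _ Am1 Ay1 (As1.trans hτ)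
    rcases hlaminar _ Am1 _ Am2 with h | h | h
    · exfalso
      have : yhat ∈ Yhat₁ τ₁ ∩ Yhat₁ τ₂ := Finset.mem_inter.2 ⟨Ay1, Ay2⟩
      simp [h] at this
    · exact h
    · exact (Finset.eq_of_subset_of_card_le h hcard).ge
  · rw [hYhat₁' τ₁ h1]
    exact Finset.empty_subset _
end

section
/- Fix a hierarchy V_T on a finite class space 𝒴, a probability vector p : 𝒴 → [0,1] with Σ_{c ∈ 𝒴} p(c) = 1, u ∈ [0,1], and an integer r ≥ 1. Let y^(1), ..., y^(K) be the classes sorted in decreasing order of p, for each k let A_r(y^(k)) be the (assumed unique) set of lowest common ancestors of y^(k) at complexity r, and let Ŷ^(1) ⊊ ... ⊊ Ŷ^(l) denote the ordered sequence of unique values among A_r(y^(1)), ..., A_r(y^(K)), with the convention Ŷ^(0) = ∅. Define Ŷ_{≤r}(τ) to be the set of maximal cardinality among the Ŷ^(k) satisfying P(Ŷ^(k−1)) + u · P(Ŷ^(k) \ Ŷ^(k−1)) ≤ τ, and Ŷ_{≤r}(τ) = ∅ if no Ŷ^(k) satisfies this. Then the predictor is nested: for all thresholds τ_1 ≤ τ_2,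 Ŷ_{≤r}(τ_1) ⊆ Ŷ_{≤r}(τ_2). -/
/-- The representation complexity `R_T(Ŷ)` of a set of classes w.r.t. a hierarchy:
the minimal number of pairwise disjoint nodes of the hierarchy whose union is `Ŷ`. -/
noncomputable def reprComplexity {𝒴 : Type*} [DecidableEq 𝒴]
    (nodes : Finset (Finset 𝒴)) (S : Finset 𝒴) : ℕ :=
  sInf {n : ℕ | ∃ F : Finset (Finset 𝒴), F ⊆ nodes ∧
    (∀ a ∈ F, ∀ b ∈ F, a ≠ b → Disjoint a b) ∧ F.sup id = S ∧ F.card = n}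

/-- **Nestedness of the CRSVP-r predictor.**
Fix a hierarchy on a finite class space `𝒴`, a probability vector `p`, `u ∈ [0,1]` and
`r ≥ 1`.  Let `A_r(y)` be the unique set of lowest common ancestors of `y` at
representation complexity `r`, and let `∅ = Ŷ⁽⁰⁾ ⊊ Ŷ⁽¹⁾ ⊊ … ⊊ Ŷ⁽ˡ⁾` be the ordered
sequence of unique values of `A_r` over the classes sorted by decreasing probability.
Let `Ŷ_{≤r}(τ)` be the set of maximal cardinality among the `Ŷ⁽ᵏ⁾` with
`P(Ŷ⁽ᵏ⁻¹⁾) + u·P(Ŷ⁽ᵏ⁾ \ Ŷ⁽ᵏ⁻¹⁾) ≤ τ` (and `∅` if there is none).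
Then `τ₁ ≤ τ₂ → Ŷ_{≤r}(τ₁) ⊆ Ŷ_{≤r}(τ₂)`. -/
theorem crsvp_r_nested
    {𝒴 : Type*} [Fintype 𝒴] [DecidableEq 𝒴]
    -- the hierarchy
    (nodes : Finset (Finset 𝒴))
    (hnodes_ne : ∀ v ∈ nodes, v.Nonempty)
    (hlaminar : ∀ v ∈ nodes, ∀ w ∈ nodes, v ∩ w = ∅ ∨ v ⊆ w ∨ w ⊆ v)
    (hroot : (Finset.univ : Finset 𝒴) ∈ nodes)
    (hleaf : ∀ c : 𝒴, ({c} : Finset 𝒴) ∈ nodes)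
    -- the probability vector
    (p : 𝒴 → ℝ) (hp0 : ∀ c, 0 ≤ p c) (hpsum : ∑ c, p c = 1)
    (P : Finset 𝒴 → ℝ) (hP : ∀ A : Finset 𝒴, P A = ∑ c ∈ A, p c)
    -- the randomization term and the representation-complexity bound
    (u : ℝ) (hu : u ∈ Set.Icc (0 : ℝ) 1)
    (r : ℕ) (hr : 1 ≤ r)
    -- ω(y) = set of classes at least as likely as y
    (ω : 𝒴 → Finset 𝒴) (hω : ∀ y y' : 𝒴, y' ∈ ω y ↔ p y ≤ p y')
    -- A_r(y): the unique set of lowest common ancestors of y at complexity r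
    (A : 𝒴 → Finset 𝒴)
    (hA_feas : ∀ y : 𝒴, reprComplexity nodes (A y) ≤ r ∧ ω y ⊆ A y)
    (hA_min : ∀ (y : 𝒴) (S : Finset 𝒴), reprComplexity nodes S ≤ r → ω y ⊆ S →
      ((A y).card : ℝ) - P (A y) ≤ (S.card : ℝ) - P S)
    (hA_unique : ∀ (y : 𝒴) (S : Finset 𝒴), reprComplexity nodes S ≤ r → ω y ⊆ S →
      ((S.card : ℝ) - P S = ((A y).card : ℝ) - P (A y)) → S = A y)
    -- the ordered sequence ∅ = Ŷ⁽⁰⁾ ⊊ Ŷ⁽¹⁾ ⊊ … ⊊ Ŷ⁽ˡ⁾ of unique values of A_r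
    (l : ℕ) (Yseq : ℕ → Finset 𝒴)
    (hY0 : Yseq 0 = ∅)
    (hYchain : ∀ k : ℕ, k < l → Yseq k ⊂ Yseq (k + 1))
    (hYvals : ∀ S : Finset 𝒴, (∃ k : ℕ, 1 ≤ k ∧ k ≤ l ∧ Yseq k = S) ↔ ∃ y : 𝒴, A y = S)
    -- the CRSVP-r set-valued predictor
    (Yhat : ℝ → Finset 𝒴)
    (hYhat : ∀ τ : ℝ,
      (∃ k : ℕ, 1 ≤ k ∧ k ≤ l ∧
          P (Yseq (k - 1)) + u * P (Yseq k \ Yseq (k - 1)) ≤ τ) →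
      ∃ k : ℕ, 1 ≤ k ∧ k ≤ l ∧
        P (Yseq (k - 1)) + u * P (Yseq k \ Yseq (k - 1)) ≤ τ ∧ Yhat τ = Yseq k ∧
        ∀ k' : ℕ, 1 ≤ k' → k' ≤ l →
          P (Yseq (k' - 1)) + u * P (Yseq k' \ Yseq (k' - 1)) ≤ τ →
          (Yseq k').card ≤ (Yseq k).card)
    (hYhat' : ∀ τ : ℝ,
      (¬ ∃ k : ℕ, 1 ≤ k ∧ k ≤ l ∧
          P (Yseq (k - 1)) + u * P (Yseq k \ Yseq (k - 1)) ≤ τ) → Yhat τ = ∅) :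
    ∀ τ₁ τ₂ : ℝ, τ₁ ≤ τ₂ → Yhat τ₁ ⊆ Yhat τ₂ := by
  intro τ₁ τ₂ hτ
  have mono : ∀ i j : ℕ, i ≤ j → j ≤ l → Yseq i ⊆ Yseq j := by
    intro i j hij hjl
    induction j with
    | zero => simp [Nat.le_zero.mp hij]
    | succ n ih =>
      rcases Nat.lt_or_ge i (n + 1) with h | h
      · exact (ih (Nat.lt_succ_iff.mp h) (le_trans (Nat.le_succ n) hjl)).trans
          (hYchain n (by omega)).subset
      · have : i = n + 1 := by omega
        simp [this]
  by_cases hex : ∃ k : ℕ, 1 ≤ k ∧ k ≤ l ∧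
      P (Yseq (k - 1)) + u * P (Yseq k \ Yseq (k - 1)) ≤ τ₁
  · obtain ⟨k₁, hk₁1, hk₁l, hk₁τ, hY1, _⟩ := hYhat τ₁ hex
    have hex2 : ∃ k : ℕ, 1 ≤ k ∧ k ≤ l ∧
        P (Yseq (k - 1)) + u * P (Yseq k \ Yseq (k - 1)) ≤ τ₂ :=
      ⟨k₁, hk₁1, hk₁l, hk₁τ.trans hτ⟩
    obtain ⟨k₂, hk₂1, hk₂l, _, hY2, hmax⟩ := hYhat τ₂ hex2
    have hc := hmax k₁ hk₁1 hk₁l (hk₁τ.trans hτ)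
    have hk : k₁ ≤ k₂ := by
      by_contra h
      push_neg at h
      have hss : Yseq k₂ ⊂ Yseq k₁ :=
        (hYchain k₂ (by omega)).trans_subset (mono (k₂ + 1) k₁ (by omega) hk₁l)
      exact absurd hc (by simpa using Finset.card_lt_card hss)
    rw [hY1, hY2]
    exact mono k₁ k₂ hk hk₂l
  · rw [hYhat' τ₁ hex]
    exact Finset.empty_subset _
end

section
/- Fix a hierarchy V_T on a finite class space 𝒴 and a probability vector p : 𝒴 → [0,1] with Σ p(c) = 1. For a node v ∈ V_T, a nonempty target set ω ⊆ v, and an integer r ≥ 1, define opt(v, ω, r) = min { |Ŷ| − P(Ŷ) : ω ⊆ Ŷ ⊆ v and Ŷ is a union of at most r pairwise disjoint nodes of V_T, each contained in v } (with opt = +∞ if no such Ŷ exists). Let v be a node with children v_1, ..., v_m (the maximal nodes of V_T strictly contained in v). Then the following Bellman recursion holds: opt(v, ω, r) = min( |v| − P(v), min over tuples (r_1, ..., r_m) of nonnegative integers with r_1 + ... + r_m ≤ r, r_i ≥ 1 for every i with ω ∩ v_i ≠ ∅, and r_i = 0 for every i with ω ∩ v_i = ∅, of Σ_{i : ω ∩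 v_i ≠ ∅} opt(v_i, ω ∩ v_i, r_i) ), where the inner minimum over an empty index family is +∞. This is the decomposition exploited by the dynamic-programming algorithm computing the set of lowest common ancestors. -/
/-- `opt nodes p v ω r` is the optimal value
`min {|Ŷ| − P(Ŷ) : ω ⊆ Ŷ ⊆ v, Ŷ a union of at most r pairwise disjoint nodes, each ⊆ v}`
(in `EReal`, with value `+∞ = sInf ∅` if no such `Ŷ` exists). -/
noncomputable def opt {𝒴 : Type*} [DecidableEq 𝒴]
    (nodes : Finset (Finset 𝒴)) (p : 𝒴 → ℝ) (v ω : Finset 𝒴) (r : ℕ) : EReal :=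
  sInf {z : EReal | ∃ S : Finset 𝒴, ω ⊆ S ∧ S ⊆ v ∧
    (∃ F : Finset (Finset 𝒴), F ⊆ nodes ∧ F.card ≤ r ∧ (∀ a ∈ F, a ⊆ v) ∧
      (∀ a ∈ F, ∀ b ∈ F, a ≠ b → Disjoint a b) ∧ F.sup id = S) ∧
    z = ((S.card : ℝ) : EReal) - ((∑ c ∈ S, p c : ℝ) : EReal)}

section Helpers

variable {𝒴 : Type*} [DecidableEq 𝒴]

/-- The objective value of a candidate set. -/
private noncomputable def gap (p : 𝒴 → ℝ) (S : Finset 𝒴) : ℝ :=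
  (S.card : ℝ) - ∑ c ∈ S, p c

private lemma ereal_coe_sum {ι : Type*} (s : Finset ι) (f : ι → ℝ) :
    ((∑ i ∈ s, f i : ℝ) : EReal) = ∑ i ∈ s, (f i : EReal) :=
  map_sum (⟨⟨Real.toEReal, EReal.coe_zero⟩, EReal.coe_add⟩ : ℝ →+ EReal) f s

private lemma ereal_sum_ne_bot {ι : Type*} {s : Finset ι} {f : ι → EReal}
    (h : ∀ i ∈ s, f i ≠ ⊥) : ∑ i ∈ s, f i ≠ ⊥ := by
  induction s using Finset.cons_induction with
  | empty => simp
  | cons a s ha ih =>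
    rw [Finset.sum_cons]
    intro hc
    rcases EReal.add_eq_bot_iff.mp hc with h' | h'
    · exact h a (Finset.mem_cons_self a s) h'
    · exact ih (fun i hi => h i (Finset.mem_cons_of_mem hi)) h'

private lemma ereal_sum_eq_top {ι : Type*} [DecidableEq ι] {s : Finset ι} {f : ι → EReal}
    (h : ∀ i ∈ s, f i ≠ ⊥) {i₀ : ι} (hi₀ : i₀ ∈ s) (htop : f i₀ = ⊤) :
    ∑ i ∈ s, f i = ⊤ := by
  rw [← Finset.add_sum_erase s f hi₀, htop]
  exact EReal.top_add_of_ne_bot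
    (ereal_sum_ne_bot fun i hi => h i (Finset.mem_of_mem_erase hi))

variable {p : 𝒴 → ℝ}

private lemma gap_coe (p : 𝒴 → ℝ) (S : Finset 𝒴) :
    ((gap p S : ℝ) : EReal) = ((S.card : ℝ) : EReal) - ((∑ c ∈ S, p c : ℝ) : EReal) :=
  EReal.coe_sub _ _

private lemma gap_mono (hp1 : ∀ c, p c ≤ 1) {S T : Finset 𝒴} (hST : S ⊆ T) :
    gap p S ≤ gap p T := by
  have h1 : (T \ S).card + S.card = T.card := Finset.card_sdiff_add_card_eq_card hST
  have h2 : ∑ c ∈ T \ S, p c + ∑ c ∈ S, p c = ∑ c ∈ T, p c := Finset.sum_sdiff hST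
  have h3 : ∑ c ∈ T \ S, p c ≤ (T \ S).card := by
    calc ∑ c ∈ T \ S, p c ≤ ∑ _c ∈ T \ S, (1 : ℝ) := Finset.sum_le_sum fun c _ => hp1 c
    _ = (T \ S).card := by simp
  simp only [gap]
  have := Nat.cast_inj (R := ℝ) |>.mpr h1
  push_cast at this ⊢
  linarith

private lemma gap_biUnion {ι : Type*} [DecidableEq ι] {s : Finset ι} {t : ι → Finset 𝒴}
    (hdisj : ∀ i ∈ s, ∀ j ∈ s, i ≠ j → Disjoint (t i) (t j)) :
    gap p (s.biUnion t) = ∑ i ∈ s, gap p (t i) := by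
  have hcard : (s.biUnion t).card = ∑ i ∈ s, (t i).card := Finset.card_biUnion hdisj
  have hsum : ∑ c ∈ s.biUnion t, p c = ∑ i ∈ s, ∑ c ∈ t i, p c :=
    Finset.sum_biUnion fun i hi j hj hij => hdisj i hi j hj hij
  simp only [gap, hcard, hsum, Nat.cast_sum, Finset.sum_sub_distrib]

variable {nodes : Finset (Finset 𝒴)} {v ω : Finset 𝒴} {r : ℕ}

private lemma opt_le_gap {S : Finset 𝒴} {F : Finset (Finset 𝒴)}
    (h1 : ω ⊆ S) (h2 : S ⊆ v) (hF1 : F ⊆ nodes) (hF2 : F.card ≤ r)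
    (hF3 : ∀ a ∈ F, a ⊆ v) (hF4 : ∀ a ∈ F, ∀ b ∈ F, a ≠ b → Disjoint a b)
    (hF5 : F.sup id = S) :
    opt nodes p v ω r ≤ ((gap p S : ℝ) : EReal) := by
  apply sInf_le
  exact ⟨S, h1, h2, ⟨F, hF1, hF2, hF3, hF4, hF5⟩, (gap_coe p S).symm⟩

variable [Fintype 𝒴]

private lemma neg_one_le_opt (hp0 : ∀ c, 0 ≤ p c) (hpsum : ∑ c, p c = 1) :
    ((-1 : ℝ) : EReal) ≤ opt nodes p v ω r := by
  apply le_sInf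
  rintro z ⟨S, -, -, -, rfl⟩
  rw [← EReal.coe_sub, EReal.coe_le_coe_iff]
  have h1 : ∑ c ∈ S, p c ≤ 1 := by
    rw [← hpsum]
    exact Finset.sum_le_sum_of_subset_of_nonneg (Finset.subset_univ S)
      (fun c _ _ => hp0 c)
  have h2 : (0 : ℝ) ≤ S.card := Nat.cast_nonneg _
  linarith

private lemma opt_ne_bot (hp0 : ∀ c, 0 ≤ p c) (hpsum : ∑ c, p c = 1) :
    opt nodes p v ω r ≠ ⊥ :=
  ((EReal.bot_lt_coe (-1)).trans_le (neg_one_le_opt hp0 hpsum)).ne'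

private lemma opt_attain (h : opt nodes p v ω r ≠ ⊤) :
    ∃ S F, ω ⊆ S ∧ S ⊆ v ∧ F ⊆ nodes ∧ F.card ≤ r ∧ (∀ a ∈ F, a ⊆ v) ∧
      (∀ a ∈ F, ∀ b ∈ F, a ≠ b → Disjoint a b) ∧ F.sup id = S ∧
      opt nodes p v ω r = ((gap p S : ℝ) : EReal) := by
  set Z : Set EReal := {z : EReal | ∃ S : Finset 𝒴, ω ⊆ S ∧ S ⊆ v ∧
    (∃ F : Finset (Finset 𝒴), F ⊆ nodes ∧ F.card ≤ r ∧ (∀ a ∈ F, a ⊆ v) ∧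
      (∀ a ∈ F, ∀ b ∈ F, a ≠ b → Disjoint a b) ∧ F.sup id = S) ∧
    z = ((S.card : ℝ) : EReal) - ((∑ c ∈ S, p c : ℝ) : EReal)} with hZ
  have hfin : Z.Finite := by
    apply (Set.finite_range
      (fun S : Finset 𝒴 => ((gap p S : ℝ) : EReal))).subset
    rintro z ⟨S, -, -, -, rfl⟩
    exact ⟨S, (gap_coe p S).symm⟩
  have hne : Z.Nonempty := by
    by_contra hempty
    rw [Set.not_nonempty_iff_eq_empty] at hempty
    exact h (by rw [opt, ← hZ, hempty, sInf_empty])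
  have hmem : sInf Z ∈ Z := hne.csInf_mem hfin
  obtain ⟨S, h1, h2, ⟨F, hF1, hF2, hF3, hF4, hF5⟩, hval⟩ := hmem
  exact ⟨S, F, h1, h2, hF1, hF2, hF3, hF4, hF5, by
    rw [opt, ← hZ, hval, gap_coe]⟩

end Helpers

/-- **Bellman recursion for the lowest-common-ancestors dynamic program.**
Fix a hierarchy on a finite class space `𝒴` and a probability vector `p`.  Let `v` be a
node with children `v₁, …, v_m` (the maximal nodes strictly contained in `v`), let
`∅ ≠ ω ⊆ v` and `r ≥ 1`.  Then
`opt(v, ω, r) = min(|v| − P(v), min over admissible tuples (r₁, …, r_m) of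
Σ_{i : ω ∩ vᵢ ≠ ∅} opt(vᵢ, ω ∩ vᵢ, rᵢ))`, where a tuple is admissible if
`r₁ + … + r_m ≤ r`, `rᵢ ≥ 1` whenever `ω ∩ vᵢ ≠ ∅` and `rᵢ = 0` whenever `ω ∩ vᵢ = ∅`;
the inner minimum over an empty family is `+∞`. -/
theorem opt_bellman_recursion
    {𝒴 : Type*} [Fintype 𝒴] [DecidableEq 𝒴]
    -- the hierarchy
    (nodes : Finset (Finset 𝒴))
    (hnodes_ne : ∀ v ∈ nodes, v.Nonempty)
    (hlaminar : ∀ v ∈ nodes, ∀ w ∈ nodes, v ∩ w = ∅ ∨ v ⊆ w ∨ w ⊆ v)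
    (hroot : (Finset.univ : Finset 𝒴) ∈ nodes)
    (hleaf : ∀ c : 𝒴, ({c} : Finset 𝒴) ∈ nodes)
    -- the probability vector
    (p : 𝒴 → ℝ) (hp0 : ∀ c, 0 ≤ p c) (hpsum : ∑ c, p c = 1)
    (P : Finset 𝒴 → ℝ) (hP : ∀ A : Finset 𝒴, P A = ∑ c ∈ A, p c)
    -- a node v with its children C (the maximal nodes of the hierarchy strictly contained in v)
    (v : Finset 𝒴) (hv : v ∈ nodes)
    (C : Finset (Finset 𝒴))
    (hC : C = nodes.filter (fun w => w ⊂ v ∧ ∀ w' ∈ nodes, w ⊂ w' → ¬ w' ⊂ v))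
    (hCne : C.Nonempty)
    -- a nonempty target set ω ⊆ v and a representation-complexity budget r ≥ 1
    (ω : Finset 𝒴) (hω : ω.Nonempty) (hωv : ω ⊆ v)
    (r : ℕ) (hr : 1 ≤ r) :
    opt nodes p v ω r =
      min (((v.card : ℝ) : EReal) - ((P v : ℝ) : EReal))
        (sInf {z : EReal | ∃ ρ : Finset 𝒴 → ℕ,
          (∑ c ∈ C, ρ c) ≤ r ∧
          (∀ c ∈ C, (ω ∩ c).Nonempty → 1 ≤ ρ c) ∧
          (∀ c ∈ C, ω ∩ c = ∅ → ρ c = 0) ∧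
          z = ∑ c ∈ C.filter (fun c => (ω ∩ c).Nonempty),
            opt nodes p c (ω ∩ c) (ρ c)}) := by
  have hp1 : ∀ c, p c ≤ 1 := by
    intro c
    rw [← hpsum]
    exact Finset.single_le_sum (fun i _ => hp0 i) (Finset.mem_univ c)
  -- structure of the children
  have hC' : ∀ c, c ∈ C ↔ (c ∈ nodes ∧ c ⊂ v ∧ ∀ w' ∈ nodes, c ⊂ w' → ¬ w' ⊂ v) := by
    intro c
    rw [hC, Finset.mem_filter]
  have hCdisj : ∀ c ∈ C, ∀ c' ∈ C, c ≠ c' → Disjoint c c' := by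
    intro c hc c' hc' hne
    obtain ⟨hcn, hcv, hcmax⟩ := (hC' c).mp hc
    obtain ⟨hc'n, hc'v, hc'max⟩ := (hC' c').mp hc'
    rcases hlaminar c hcn c' hc'n with h | h | h
    · exact Finset.disjoint_iff_inter_eq_empty.mpr h
    · exact absurd hc'v (hcmax c' hc'n (h.ssubset_of_ne hne))
    · exact absurd hcv (hc'max c hcn (h.ssubset_of_ne hne.symm))
  have hchild : ∀ a ∈ nodes, a ⊂ v → ∃ c ∈ C, a ⊆ c := by
    intro a han hav
    have hTne : (nodes.filter (fun w => a ⊆ w ∧ w ⊂ v)).Nonempty :=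
      ⟨a, Finset.mem_filter.mpr ⟨han, subset_rfl, hav⟩⟩
    obtain ⟨w₀, hw₀, hmax⟩ :=
      Finset.exists_max_image (nodes.filter (fun w => a ⊆ w ∧ w ⊂ v))
        (fun w => w.card) hTne
    obtain ⟨hw₀n, haw₀, hw₀v⟩ := Finset.mem_filter.mp hw₀
    refine ⟨w₀, (hC' w₀).mpr ⟨hw₀n, hw₀v, ?_⟩, haw₀⟩
    intro w' hw' hsub hv'
    have hw'T : w' ∈ nodes.filter (fun w => a ⊆ w ∧ w ⊂ v) :=
      Finset.mem_filter.mpr ⟨hw', haw₀.trans hsub.subset, hv'⟩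
    exact absurd (Finset.card_lt_card hsub) (not_lt.mpr (hmax w' hw'T))
  have hcover : ∀ x ∈ v, ∃ c ∈ C, x ∈ c := by
    intro x hx
    have hne : ({x} : Finset 𝒴) ≠ v := by
      intro hxv
      obtain ⟨c₀, hc₀⟩ := hCne
      obtain ⟨hc₀n, hc₀v, -⟩ := (hC' c₀).mp hc₀
      have := Finset.subset_singleton_iff.mp (hxv ▸ hc₀v.subset)
      rcases this with h | h
      · exact (hnodes_ne c₀ hc₀n).ne_empty h
      · exact hc₀v.ne (h.trans hxv)
    obtain ⟨c, hc, hsub⟩ := hchild {x} (hleaf x)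
      ((Finset.singleton_subset_iff.mpr hx).ssubset_of_ne hne)
    exact ⟨c, hc, hsub (Finset.mem_singleton_self x)⟩
  have huniq : ∀ c ∈ C, ∀ c' ∈ C, ∀ x, x ∈ c → x ∈ c' → c = c' := by
    intro c hc c' hc' x hx hx'
    by_contra hne
    exact (hCdisj c hc c' hc' hne).forall_ne_finset hx hx' rfl
  set good := C.filter (fun c => (ω ∩ c).Nonempty) with hgood
  apply le_antisymm
  · -- opt ≤ min(...)
    apply le_min
    · -- opt ≤ |v| − P(v)
      rw [hP, ← gap_coe p v]
      exact opt_le_gap hωv subset_rfl (Finset.singleton_subset_iff.mpr hv)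
        (by simpa using hr) (by simp) (by simp) Finset.sup_singleton
    · -- opt ≤ inner inf
      apply le_sInf
      rintro z ⟨ρ, hρr, hρ1, hρ0, rfl⟩
      by_cases htop : ∃ c ∈ good, opt nodes p c (ω ∩ c) (ρ c) = ⊤
      · obtain ⟨c₀, hc₀, hc₀top⟩ := htop
        rw [ereal_sum_eq_top (f := fun c => opt nodes p c (ω ∩ c) (ρ c))
          (fun c _ => opt_ne_bot hp0 hpsum) hc₀ hc₀top]
        exact le_top
      · push_neg at htop
        have key : ∀ c : Finset 𝒴, ∃ SF : Finset 𝒴 × Finset (Finset 𝒴),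
            c ∈ good →
            (ω ∩ c ⊆ SF.1 ∧ SF.1 ⊆ c ∧ SF.2 ⊆ nodes ∧ SF.2.card ≤ ρ c ∧
              (∀ a ∈ SF.2, a ⊆ c) ∧
              (∀ a ∈ SF.2, ∀ b ∈ SF.2, a ≠ b → Disjoint a b) ∧
              SF.2.sup id = SF.1 ∧
              opt nodes p c (ω ∩ c) (ρ c) = ((gap p SF.1 : ℝ) : EReal)) := by
          intro c
          by_cases hc : c ∈ good
          · obtain ⟨S, F, h1, h2, h3, h4, h5, h6, h7, h8⟩ := opt_attain (htop c hc)
            exact ⟨(S, F), fun _ => ⟨h1, h2, h3, h4, h5, h6, h7, h8⟩⟩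
          · exact ⟨(∅, ∅), fun h => absurd h hc⟩
        choose SF hSF using key
        set Sc : Finset 𝒴 → Finset 𝒴 := fun c => (SF c).1 with hSc
        set Fc : Finset 𝒴 → Finset (Finset 𝒴) := fun c => (SF c).2 with hFc
        -- the big union
        set S : Finset 𝒴 := good.biUnion Sc with hS
        set F : Finset (Finset 𝒴) := good.biUnion Fc with hF
        have hgoodC : good ⊆ C := Finset.filter_subset _ _
        have hcv : ∀ c ∈ good, c ⊆ v := fun c hc =>
          ((hC' c).mp (hgoodC hc)).2.1.subset
        have hScdisj : ∀ c ∈ good, ∀ c' ∈ good, c ≠ c' → Disjoint (Sc c) (Sc c') := by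
          intro c hc c' hc' hne
          exact Finset.disjoint_of_subset_left ((hSF c hc).2.1)
            (Finset.disjoint_of_subset_right ((hSF c' hc').2.1)
              (hCdisj c (hgoodC hc) c' (hgoodC hc') hne))
        have hωS : ω ⊆ S := by
          intro x hx
          obtain ⟨c, hc, hxc⟩ := hcover x (hωv hx)
          have hcg : c ∈ good := Finset.mem_filter.mpr ⟨hc, ⟨x, Finset.mem_inter.mpr ⟨hx, hxc⟩⟩⟩
          exact Finset.mem_biUnion.mpr ⟨c, hcg, (hSF c hcg).1 (Finset.mem_inter.mpr ⟨hx, hxc⟩)⟩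
        have hSv : S ⊆ v := by
          intro x hx
          obtain ⟨c, hc, hxc⟩ := Finset.mem_biUnion.mp hx
          exact hcv c hc ((hSF c hc).2.1 hxc)
        have hFnodes : F ⊆ nodes := by
          intro a ha
          obtain ⟨c, hc, hac⟩ := Finset.mem_biUnion.mp ha
          exact (hSF c hc).2.2.1 hac
        have hFcard : F.card ≤ r := by
          calc F.card ≤ ∑ c ∈ good, (Fc c).card := Finset.card_biUnion_le
          _ ≤ ∑ c ∈ good, ρ c := Finset.sum_le_sum fun c hc => (hSF c hc).2.2.2.1
          _ ≤ ∑ c ∈ C, ρ c := Finset.sum_le_sum_of_subset hgoodC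
          _ ≤ r := hρr
        have hFv : ∀ a ∈ F, a ⊆ v := by
          intro a ha
          obtain ⟨c, hc, hac⟩ := Finset.mem_biUnion.mp ha
          exact ((hSF c hc).2.2.2.2.1 a hac).trans (hcv c hc)
        have hFdisj : ∀ a ∈ F, ∀ b ∈ F, a ≠ b → Disjoint a b := by
          intro a ha b hb hab
          obtain ⟨c, hc, hac⟩ := Finset.mem_biUnion.mp ha
          obtain ⟨c', hc', hbc⟩ := Finset.mem_biUnion.mp hb
          by_cases hcc : c = c'
          · subst hcc
            exact (hSF c hc).2.2.2.2.2.1 a hac b hbc hab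
          · exact Finset.disjoint_of_subset_left ((hSF c hc).2.2.2.2.1 a hac)
              (Finset.disjoint_of_subset_right ((hSF c' hc').2.2.2.2.1 b hbc)
                (hCdisj c (hgoodC hc) c' (hgoodC hc') hcc))
        have hFsup : F.sup id = S := by
          rw [hF, Finset.sup_biUnion, hS, ← Finset.sup_eq_biUnion good Sc]
          exact Finset.sup_congr rfl fun c hc => (hSF c hc).2.2.2.2.2.2.1
        have hgapS : gap p S = ∑ c ∈ good, gap p (Sc c) := gap_biUnion hScdisj
        calc opt nodes p v ω r ≤ ((gap p S : ℝ) : EReal) :=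
              opt_le_gap hωS hSv hFnodes hFcard hFv hFdisj hFsup
        _ = ∑ c ∈ good, ((gap p (Sc c) : ℝ) : EReal) := by
              rw [hgapS, ereal_coe_sum]
        _ = ∑ c ∈ good, opt nodes p c (ω ∩ c) (ρ c) :=
              Finset.sum_congr rfl fun c hc => ((hSF c hc).2.2.2.2.2.2.2).symm
  · -- min(...) ≤ opt
    apply le_sInf
    rintro z ⟨S, hωS, hSv, ⟨F, hF1, hF2, hF3, hF4, hF5⟩, rfl⟩
    by_cases hvF : v ∈ F
    · -- F = {v}, S = v
      have hSeqv : S = v := by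
        apply le_antisymm hSv
        rw [← hF5]
        exact Finset.le_sup (f := id) hvF
      apply le_trans (min_le_left _ _)
      rw [hP, hSeqv]
    · -- every node of F sits inside a child
      apply le_trans (min_le_right _ _)
      have hchildF : ∀ a ∈ F, ∃ c ∈ C, a ⊆ c := by
        intro a ha
        exact hchild a (hF1 ha) ((hF3 a ha).ssubset_of_ne (fun h => hvF (h ▸ ha)))
      set ρ : Finset 𝒴 → ℕ := fun c =>
        if c ∈ good then (F.filter (fun a => a ⊆ c)).card else 0 with hρ
      set Sc : Finset 𝒴 → Finset 𝒴 := fun c => (F.filter (fun a => a ⊆ c)).sup id with hSc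
      -- each point of ω ∩ c is covered within the child c
      have hωc : ∀ c ∈ good, ω ∩ c ⊆ Sc c := by
        intro c hc x hx
        obtain ⟨hxω, hxc⟩ := Finset.mem_inter.mp hx
        have hxS : x ∈ S := hωS hxω
        rw [← hF5] at hxS
        obtain ⟨a, haF, hxa⟩ := Finset.mem_sup.mp hxS
        obtain ⟨c', hc', hac'⟩ := hchildF a haF
        have hcc' : c = c' := huniq c (Finset.filter_subset _ _ hc) c' hc' x hxc (hac' hxa)
        subst hcc'
        exact Finset.mem_sup.mpr ⟨a, Finset.mem_filter.mpr ⟨haF, hac'⟩, hxa⟩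
      have hρ1 : ∀ c ∈ C, (ω ∩ c).Nonempty → 1 ≤ ρ c := by
        intro c hc hne
        have hcg : c ∈ good := Finset.mem_filter.mpr ⟨hc, hne⟩
        have : ρ c = (F.filter (fun a => a ⊆ c)).card := by
          simp only [hρ]; rw [if_pos hcg]
        rw [this]
        obtain ⟨x, hx⟩ := hne
        have := hωc c hcg hx
        obtain ⟨a, ha, -⟩ := Finset.mem_sup.mp this
        exact Finset.card_pos.mpr ⟨a, ha⟩
      have hρ0 : ∀ c ∈ C, ω ∩ c = ∅ → ρ c = 0 := by
        intro c hc hempty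
        have hng : c ∉ good := fun hcg => (Finset.mem_filter.mp hcg).2.ne_empty hempty
        simp only [hρ]
        rw [if_neg hng]
      -- the filtered families are pairwise disjoint inside F
      have hfilter_disj : ∀ c ∈ good, ∀ c' ∈ good, c ≠ c' →
          Disjoint (F.filter (fun a => a ⊆ c)) (F.filter (fun a => a ⊆ c')) := by
        intro c hc c' hc' hne
        rw [Finset.disjoint_left]
        intro a ha ha'
        obtain ⟨haF, hac⟩ := Finset.mem_filter.mp ha
        obtain ⟨-, hac'⟩ := Finset.mem_filter.mp ha'
        have hdisj := hCdisj c (Finset.filter_subset _ _ hc) c'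
          (Finset.filter_subset _ _ hc') hne
        obtain ⟨x, hx⟩ := hnodes_ne a (hF1 haF)
        exact hdisj.forall_ne_finset (hac hx) (hac' hx) rfl
      have hρr : ∑ c ∈ C, ρ c ≤ r := by
        have h1 : ∑ c ∈ C, ρ c = ∑ c ∈ good, (F.filter (fun a => a ⊆ c)).card := by
          rw [hgood, Finset.sum_filter]
          apply Finset.sum_congr rfl
          intro c hc
          simp only [hρ]
          by_cases hcg : c ∈ good
          · rw [if_pos hcg, if_pos (Finset.mem_filter.mp hcg).2]
          · rw [if_neg hcg, if_neg (fun h => hcg (Finset.mem_filter.mpr ⟨hc, h⟩))]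
        rw [h1, ← Finset.card_biUnion (fun c hc c' hc' h => hfilter_disj c hc c' hc' h)]
        calc (good.biUnion fun c => F.filter (fun a => a ⊆ c)).card ≤ F.card := by
              apply Finset.card_le_card
              exact Finset.biUnion_subset.mpr fun c _ => Finset.filter_subset _ _
        _ ≤ r := hF2
      -- membership of the candidate tuple value
      have hmem : (∑ c ∈ good, opt nodes p c (ω ∩ c) (ρ c)) ∈
          {z : EReal | ∃ ρ : Finset 𝒴 → ℕ,
            (∑ c ∈ C, ρ c) ≤ r ∧
            (∀ c ∈ C, (ω ∩ c).Nonempty → 1 ≤ ρ c) ∧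
            (∀ c ∈ C, ω ∩ c = ∅ → ρ c = 0) ∧
            z = ∑ c ∈ C.filter (fun c => (ω ∩ c).Nonempty),
              opt nodes p c (ω ∩ c) (ρ c)} :=
        ⟨ρ, hρr, hρ1, hρ0, rfl⟩
      apply le_trans (sInf_le hmem)
      -- bound each opt by the gap of its part
      have hScc : ∀ c ∈ good, Sc c ⊆ c := by
        intro c hc x hx
        obtain ⟨a, ha, hxa⟩ := Finset.mem_sup.mp hx
        exact (Finset.mem_filter.mp ha).2 hxa
      have hoptle : ∀ c ∈ good, opt nodes p c (ω ∩ c) (ρ c) ≤ ((gap p (Sc c) : ℝ) : EReal) := by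
        intro c hc
        apply opt_le_gap (hωc c hc) (hScc c hc)
          ((Finset.filter_subset _ _).trans hF1)
          (le_of_eq (by simp only [hρ]; rw [if_pos hc]))
          (fun a ha => (Finset.mem_filter.mp ha).2)
          (fun a ha b hb hab => hF4 a (Finset.filter_subset _ _ ha)
            b (Finset.filter_subset _ _ hb) hab)
          rfl
      have hScdisj : ∀ c ∈ good, ∀ c' ∈ good, c ≠ c' → Disjoint (Sc c) (Sc c') := by
        intro c hc c' hc' hne
        exact Finset.disjoint_of_subset_left (hScc c hc)
          (Finset.disjoint_of_subset_right (hScc c' hc')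
            (hCdisj c (Finset.filter_subset _ _ hc) c' (Finset.filter_subset _ _ hc') hne))
      have hgapsum : ∑ c ∈ good, gap p (Sc c) ≤ gap p S := by
        rw [← gap_biUnion hScdisj]
        apply gap_mono hp1
        apply Finset.biUnion_subset.mpr
        intro c hc
        rw [← hF5]
        intro x hx
        obtain ⟨a, ha, hxa⟩ := Finset.mem_sup.mp hx
        exact Finset.mem_sup.mpr ⟨a, Finset.filter_subset _ _ ha, hxa⟩
      calc ∑ c ∈ good, opt nodes p c (ω ∩ c) (ρ c)
          ≤ ∑ c ∈ good, ((gap p (Sc c) : ℝ) : EReal) := Finset.sum_le_sum hoptle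
      _ = ((∑ c ∈ good, gap p (Sc c) : ℝ) : EReal) := (ereal_coe_sum _ _).symm
      _ ≤ ((gap p S : ℝ) : EReal) := EReal.coe_le_coe_iff.mpr hgapsum
      _ = ((S.card : ℝ) : EReal) - ((∑ c ∈ S, p c : ℝ) : EReal) := gap_coe p S
end
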